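/- Let E^{i_1…i_k} : ℝ^d → ℝ be smooth compactly supported, totally symmetric and totally traceless (any contraction of two indices with δ vanishes), and define ρ = ∂_{i_1}⋯∂_{i_k} E^{i_1…i_k}. Then for all l and n with l − k + 1 ≤ n ≤ ⌊l/2⌋, the moments ∫_{ℝ^d} |x|^{2n} x^{i_1}⋯x^{i_{l−2n}} ρ dx vanish; in particular no such conserved moments exist for l > 2k − 2. -/

import Mathlib

open MeasureTheory MvPolynomial

/-- Partial derivative in direction `i` of a function on `ℝ^d`. -/
noncomputable def pd {d : ℕ} (i : Fin d) (f : (Fin d → ℝ) → ℝ) : (Fin d → ℝ) → ℝ :=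
  fun x => fderiv ℝ f x (Pi.single i 1)

/-- The Euclidean Laplacian `Δ f = ∑ i ∂_i ∂_i f`. -/
noncomputable def lap {d : ℕ} (f : (Fin d → ℝ) → ℝ) : (Fin d → ℝ) → ℝ :=
  fun x => ∑ i : Fin d, pd i (pd i f) x

/-- The Laplacian on polynomials: `Δ p = ∑ i ∂_i ∂_i p`. -/
noncomputable def plap {d : ℕ} (p : MvPolynomial (Fin d) ℝ) : MvPolynomial (Fin d) ℝ :=
  ∑ i : Fin d, pderiv i (pderiv i p)


/-- Iterated partial derivative `∂_{ι 0} ⋯ ∂_{ι (k-1)} f`. -/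
noncomputable def pdMulti {d : ℕ} : {k : ℕ} → (Fin k → Fin d) → ((Fin d → ℝ) → ℝ) → ((Fin d → ℝ) → ℝ)
  | 0, _, f => f
  | _ + 1, ι, f => pd (ι 0) (pdMulti (ι ∘ Fin.succ) f)


section Aux

variable {d : ℕ}

/-- Resampling a coordinate of a function-indexed sum. -/
lemma resample {β : Type*} [Fintype β] [DecidableEq β] {M : Type*} [AddCommMonoid M]
    (F : (β → Fin d) → M) (a : β) :
    ∑ g : β → Fin d, ∑ i : Fin d, F (Function.update g a i) = d • ∑ g : β → Fin d, F g := by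
  let e : ((β → Fin d) × Fin d) ≃ ((β → Fin d) × Fin d) :=
    { toFun := fun p => (Function.update p.1 a p.2, p.1 a)
      invFun := fun p => (Function.update p.1 a p.2, p.1 a)
      left_inv := fun p => by
        simp [Function.update_idem, Function.update_self, Function.update_eq_self]
      right_inv := fun p => by
        simp [Function.update_idem, Function.update_self, Function.update_eq_self] }
  have hcomp := Equiv.sum_comp e (fun q : (β → Fin d) × Fin d => F q.1)
  calc ∑ g : β → Fin d, ∑ i : Fin d, F (Function.update g a i)
      = ∑ p : (β → Fin d) × Fin d, F (Function.update p.1 a p.2) := by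
        rw [Fintype.sum_prod_type]
    _ = ∑ p : (β → Fin d) × Fin d, F p.1 := hcomp
    _ = ∑ g : β → Fin d, ∑ _i : Fin d, F g := by rw [Fintype.sum_prod_type]
    _ = d • ∑ g : β → Fin d, F g := by
        simp [Finset.sum_const, Finset.smul_sum]

/-- The main "tracelessness kills diagonal contractions" lemma. -/
lemma kill (hd : 0 < d) {β γ : Type*} [Fintype β] [DecidableEq β] [Fintype γ] [DecidableEq γ]
    {M : Type*} [AddCommMonoid M] [Module ℝ M]
    (T : (β → Fin d) → (γ → Fin d) → ℝ) (H : (β → Fin d) → (γ → Fin d) → M)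
    (a : β) (c : γ)
    (hT : ∀ ι κ, ∑ i : Fin d, T (Function.update ι a i) (Function.update κ c i) = 0)
    (hHa : ∀ ι κ i, H (Function.update ι a i) κ = H ι κ)
    (hHc : ∀ ι κ i, H ι (Function.update κ c i) = H ι κ) :
    ∑ ι : β → Fin d, ∑ κ : γ → Fin d,
      (if κ c = ι a then T ι κ • H ι κ else 0) = 0 := by
  set S := ∑ ι : β → Fin d, ∑ κ : γ → Fin d,
      (if κ c = ι a then T ι κ • H ι κ else 0) with hS
  have r1 : d • S = ∑ ι : β → Fin d, ∑ κ : γ → Fin d,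
      T (Function.update ι a (κ c)) κ • H ι κ := by
    rw [← resample (fun ι => ∑ κ : γ → Fin d,
      (if κ c = ι a then T ι κ • H ι κ else 0)) a]
    refine Finset.sum_congr rfl fun ι _ => ?_
    rw [Finset.sum_comm]
    refine Finset.sum_congr rfl fun κ _ => ?_
    have : ∀ i : Fin d,
        (if κ c = Function.update ι a i a then T (Function.update ι a i) κ •
          H (Function.update ι a i) κ else 0)
        = (if κ c = i then T (Function.update ι a i) κ • H ι κ else 0) := by
      intro i; rw [Function.update_self, hHa]
    simp_rw [this]
    rw [Finset.sum_ite_eq]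
    simp
  have r2 : d • (∑ ι : β → Fin d, ∑ κ : γ → Fin d,
      T (Function.update ι a (κ c)) κ • H ι κ) = 0 := by
    have swap : ∀ ι : β → Fin d,
        d • (∑ κ : γ → Fin d, T (Function.update ι a (κ c)) κ • H ι κ)
          = ∑ κ : γ → Fin d, (∑ i : Fin d,
              T (Function.update ι a i) (Function.update κ c i)) • H ι κ := by
      intro ι
      rw [← resample (fun κ => T (Function.update ι a (κ c)) κ • H ι κ) c]
      refine Finset.sum_congr rfl fun κ _ => ?_
      rw [Finset.sum_smul]
      refine Finset.sum_congr rfl fun i _ => ?_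
      rw [Function.update_self, hHc]
    rw [Finset.smul_sum]
    calc ∑ ι : β → Fin d, d • (∑ κ : γ → Fin d, T (Function.update ι a (κ c)) κ • H ι κ)
        = ∑ ι : β → Fin d, ∑ κ : γ → Fin d, (∑ i : Fin d,
            T (Function.update ι a i) (Function.update κ c i)) • H ι κ := by
          exact Finset.sum_congr rfl fun ι _ => swap ι
      _ = 0 := by simp [hT]
  have hzero : d • (d • S) = 0 := by rw [r1, r2]
  have hd' : ((d : ℝ)) ≠ 0 := Nat.cast_ne_zero.2 hd.ne'
  have : ((d : ℝ) * (d : ℝ)) • S = 0 := by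
    rw [mul_smul, Nat.cast_smul_eq_nsmul, Nat.cast_smul_eq_nsmul, hzero]
  rcases smul_eq_zero.1 this with h | h
  · exact absurd h (by positivity)
  · exact h

/-- Iterated pderiv, first index applied first (innermost). -/
noncomputable def pdm {d : ℕ} : {q : ℕ} → (Fin q → Fin d) →
    MvPolynomial (Fin d) ℝ →ₗ[ℝ] MvPolynomial (Fin d) ℝ
  | 0, _ => LinearMap.id
  | _ + 1, ι => (pdm (ι ∘ Fin.succ)).comp (pderiv (ι 0)).toLinearMap

@[simp] lemma pdm_zero_apply (ι : Fin 0 → Fin d) (p : MvPolynomial (Fin d) ℝ) :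
    pdm ι p = p := rfl

lemma pdm_succ_apply {q : ℕ} (ι : Fin (q + 1) → Fin d) (p : MvPolynomial (Fin d) ℝ) :
    pdm ι p = pdm (ι ∘ Fin.succ) (pderiv (ι 0) p) := rfl

lemma pdm_ite {q : ℕ} (ι : Fin q → Fin d) (c : Prop) [Decidable c]
    (p : MvPolynomial (Fin d) ℝ) :
    pdm ι (if c then p else 0) = if c then pdm ι p else 0 := by
  split_ifs <;> simp

lemma pderiv_r2 (i : Fin d) :
    pderiv i (∑ m : Fin d, X m ^ 2 : MvPolynomial (Fin d) ℝ) = 2 * X i := by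
  rw [map_sum]
  have : ∀ m : Fin d, pderiv i (X m ^ 2 : MvPolynomial (Fin d) ℝ)
      = if m = i then 2 * X m else 0 := by
    intro m
    rw [pderiv_pow, pderiv_X, Pi.single_apply]
    split_ifs <;> ring
  simp_rw [this]
  rw [Finset.sum_ite_eq']
  simp

lemma pderiv_r2pow (i : Fin d) (n : ℕ) :
    pderiv i ((∑ m : Fin d, X m ^ 2 : MvPolynomial (Fin d) ℝ) ^ n)
      = (2 * (n : ℝ)) • (X i * (∑ m : Fin d, X m ^ 2 : MvPolynomial (Fin d) ℝ) ^ (n - 1)) := by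
  rw [pderiv_pow, pderiv_r2, smul_eq_C_mul, map_mul, map_ofNat, map_natCast]
  ring

lemma pderiv_prod_X' {α : Type*} [DecidableEq α] (i : Fin d) (κ : α → Fin d) (s : Finset α) :
    pderiv i (∏ a ∈ s, X (κ a) : MvPolynomial (Fin d) ℝ)
      = ∑ a ∈ s, if κ a = i then (∏ b ∈ s.erase a, X (κ b) : MvPolynomial (Fin d) ℝ) else 0 := by
  induction s using Finset.induction_on with
  | empty => simp
  | @insert c s hc IH =>
    rw [Finset.prod_insert hc, pderiv_mul, IH, Finset.sum_insert hc,
      Finset.erase_insert hc, pderiv_X, Pi.single_apply]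
    have : ∀ a ∈ s, (if κ a = i then (∏ b ∈ (insert c s).erase a, X (κ b) :
        MvPolynomial (Fin d) ℝ) else 0)
        = X (κ c) * (if κ a = i then (∏ b ∈ s.erase a, X (κ b)) else 0) := by
      intro a ha
      have hac : c ≠ a := by rintro rfl; exact hc ha
      rw [Finset.erase_insert_of_ne hac,
        Finset.prod_insert (fun h => hc (Finset.mem_of_mem_erase h))]
      split_ifs <;> simp
    rw [Finset.sum_congr rfl this, ← Finset.mul_sum]
    split_ifs <;> ring

lemma pderiv_totalDegree_zero (i : Fin d) (Q : MvPolynomial (Fin d) ℝ)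
    (h : Q.totalDegree = 0) : pderiv i Q = 0 := by
  rw [(MvPolynomial.totalDegree_eq_zero_iff _ Q)] at h
  conv_lhs => rw [Q.as_sum]
  rw [map_sum]
  refine Finset.sum_eq_zero fun s hs => ?_
  rw [pderiv_monomial, h s hs i]
  simp

lemma totalDegree_pderiv_le (i : Fin d) (Q : MvPolynomial (Fin d) ℝ) :
    (pderiv i Q).totalDegree ≤ Q.totalDegree - 1 := by
  conv_lhs => rw [Q.as_sum]
  rw [map_sum]
  refine (MvPolynomial.totalDegree_finset_sum _ _).trans (Finset.sup_le fun s hs => ?_)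
  rw [pderiv_monomial]
  by_cases h : s i = 0
  · simp [h]
  · refine (MvPolynomial.totalDegree_monomial_le _ _).trans ?_
    simp only [Function.id_def]
    have hle : Finsupp.single i 1 ≤ s := Finsupp.single_le_iff.2 (Nat.one_le_iff_ne_zero.2 h)
    have hsum : (s - Finsupp.single i 1).sum (fun _ e => e) + 1 = s.sum (fun _ e => e) := by
      conv_rhs => rw [← tsub_add_cancel_of_le hle]
      rw [Finsupp.sum_add_index' (fun _ => rfl) (fun _ _ _ => rfl),
        Finsupp.sum_single_index rfl]
    have := MvPolynomial.le_totalDegree hs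
    omega

lemma sum_pi_succ {q : ℕ} {M : Type*} [AddCommMonoid M] (f : (Fin (q + 1) → Fin d) → M) :
    ∑ g : Fin (q + 1) → Fin d, f g
      = ∑ i : Fin d, ∑ g : Fin q → Fin d, f (Fin.cons i g) := by
  rw [← Equiv.sum_comp (Fin.consEquiv (fun _ => Fin d)) f, Fintype.sum_prod_type]
  rfl

lemma cons_comp_succ {q : ℕ} (j : Fin d) (ι : Fin q → Fin d) :
    (Fin.cons j ι : Fin (q+1) → Fin d) ∘ Fin.succ = ι := by
  funext a; simp

lemma update_zero_comp_succ {q : ℕ} (ι : Fin (q+1) → Fin d) (i : Fin d) :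
    (Function.update ι 0 i) ∘ Fin.succ = ι ∘ Fin.succ := by
  funext a; simp [Function.update_apply, Fin.succ_ne_zero]

lemma update_succ_comp_succ {m : ℕ} (κ : Fin (m+1) → Fin d) (b : Fin m) (i : Fin d) :
    (Function.update κ b.succ i) ∘ Fin.succ = Function.update (κ ∘ Fin.succ) b i := by
  funext a
  simp [Function.update_apply, Fin.succ_inj]

end Aux

section Key

variable {d : ℕ}

lemma key (hd : 0 < d) :
    ∀ (q m n : ℕ) (T : (Fin q → Fin d) → (Fin m → Fin d) → ℝ) (Q : MvPolynomial (Fin d) ℝ),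
    (∀ (ι : Fin q → Fin d) (κ : Fin m → Fin d) (a b : Fin q), a ≠ b →
      ∑ i : Fin d, T (Function.update (Function.update ι a i) b i) κ = 0) →
    (∀ (ι : Fin q → Fin d) (κ : Fin m → Fin d) (a b : Fin m), a ≠ b →
      ∑ i : Fin d, T ι (Function.update (Function.update κ a i) b i) = 0) →
    (∀ (ι : Fin q → Fin d) (κ : Fin m → Fin d) (a : Fin q) (b : Fin m),
      ∑ i : Fin d, T (Function.update ι a i) (Function.update κ b i) = 0) →
    Q.totalDegree + n + 1 ≤ q →
    ∑ ι : Fin q → Fin d, ∑ κ : Fin m → Fin d,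
      T ι κ • pdm ι ((∏ a : Fin m, X (κ a)) *
        ((∑ i : Fin d, X i ^ 2 : MvPolynomial (Fin d) ℝ) ^ n * Q)) = 0 := by
  intro q
  induction q with
  | zero => intro m n T Q _ _ _ hdeg; omega
  | succ q IH =>
    intro m n T Q h1 h2 h3 hdeg
    set r2p : MvPolynomial (Fin d) ℝ := ∑ i : Fin d, X i ^ 2 with hr2p
    have expand : ∀ (ι : Fin (q+1) → Fin d) (κ : Fin m → Fin d),
        T ι κ • pdm ι ((∏ a : Fin m, X (κ a)) * (r2p ^ n * Q))
        = (∑ a : Fin m, if κ a = ι 0 then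
            T ι κ • pdm (ι ∘ Fin.succ)
              ((∏ b ∈ Finset.univ.erase a, X (κ b)) * (r2p ^ n * Q)) else 0)
          + (2 * (n:ℝ)) • (T ι κ • pdm (ι ∘ Fin.succ)
              ((X (ι 0) * ∏ a : Fin m, X (κ a)) * (r2p ^ (n-1) * Q)))
          + T ι κ • pdm (ι ∘ Fin.succ)
              ((∏ a : Fin m, X (κ a)) * (r2p ^ n * pderiv (ι 0) Q)) := by
      intro ι κ
      have hlprod : pderiv (ι 0) ((∏ a : Fin m, X (κ a)) * (r2p ^ n * Q))
          = (∑ a : Fin m, if κ a = ι 0 then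
              ((∏ b ∈ Finset.univ.erase a, X (κ b)) * (r2p ^ n * Q)) else 0)
            + ((2 * (n:ℝ)) • ((X (ι 0) * ∏ a : Fin m, X (κ a)) * (r2p ^ (n-1) * Q)))
            + ((∏ a : Fin m, X (κ a)) * (r2p ^ n * pderiv (ι 0) Q)) := by
        rw [pderiv_mul, pderiv_mul, pderiv_prod_X' (ι 0) κ Finset.univ, pderiv_r2pow,
          Finset.sum_mul]
        simp_rw [ite_mul, zero_mul]
        rw [smul_eq_C_mul, smul_eq_C_mul]
        ring
      rw [pdm_succ_apply, hlprod, map_add, map_add, smul_add, smul_add]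
      congr 1
      congr 1
      · rw [map_sum, Finset.smul_sum]
        refine Finset.sum_congr rfl fun a _ => ?_
        rw [pdm_ite]
        split_ifs <;> simp
      · rw [LinearMap.map_smul, smul_comm]
    have hA : ∑ ι : Fin (q+1) → Fin d, ∑ κ : Fin m → Fin d,
        (∑ a : Fin m, if κ a = ι 0 then
            T ι κ • pdm (ι ∘ Fin.succ)
              ((∏ b ∈ Finset.univ.erase a, X (κ b)) * (r2p ^ n * Q)) else 0) = 0 := by
      have swap1 : ∀ ι : Fin (q+1) → Fin d,
          (∑ κ : Fin m → Fin d, ∑ a : Fin m, if κ a = ι 0 then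
            T ι κ • pdm (ι ∘ Fin.succ)
              ((∏ b ∈ Finset.univ.erase a, X (κ b)) * (r2p ^ n * Q)) else 0)
          = ∑ a : Fin m, ∑ κ : Fin m → Fin d, if κ a = ι 0 then
            T ι κ • pdm (ι ∘ Fin.succ)
              ((∏ b ∈ Finset.univ.erase a, X (κ b)) * (r2p ^ n * Q)) else 0 :=
        fun ι => Finset.sum_comm
      simp_rw [swap1]
      rw [Finset.sum_comm]
      refine Finset.sum_eq_zero fun a _ => ?_
      exact kill hd T
        (fun ι κ => pdm (ι ∘ Fin.succ) ((∏ b ∈ Finset.univ.erase a, X (κ b)) * (r2p ^ n * Q)))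
        0 a (fun ι κ => h3 ι κ 0 a)
        (fun ι κ i => by beta_reduce; rw [update_zero_comp_succ])
        (fun ι κ i => by
          beta_reduce
          have hpr : (∏ b ∈ Finset.univ.erase a, X (Function.update κ a i b) :
              MvPolynomial (Fin d) ℝ) = ∏ b ∈ Finset.univ.erase a, X (κ b) :=
            Finset.prod_congr rfl fun b hb => by
              rw [Function.update_of_ne (Finset.ne_of_mem_erase hb)]
          rw [hpr])
    have hB : ∑ ι : Fin (q+1) → Fin d, ∑ κ : Fin m → Fin d,
        (2 * (n:ℝ)) • (T ι κ • pdm (ι ∘ Fin.succ)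
              ((X (ι 0) * ∏ a : Fin m, X (κ a)) * (r2p ^ (n-1) * Q))) = 0 := by
      have : ∑ ι : Fin (q+1) → Fin d, ∑ κ : Fin m → Fin d,
          (2 * (n:ℝ)) • (T ι κ • pdm (ι ∘ Fin.succ)
              ((X (ι 0) * ∏ a : Fin m, X (κ a)) * (r2p ^ (n-1) * Q)))
          = (2 * (n:ℝ)) • ∑ ι : Fin (q+1) → Fin d, ∑ κ : Fin m → Fin d,
              T ι κ • pdm (ι ∘ Fin.succ)
              ((X (ι 0) * ∏ a : Fin m, X (κ a)) * (r2p ^ (n-1) * Q)) := by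
        rw [Finset.smul_sum]
        exact Finset.sum_congr rfl fun ι _ => by rw [Finset.smul_sum]
      rw [this]
      rcases n with _ | n'
      · simp
      have hbracket : ∑ ι : Fin (q+1) → Fin d, ∑ κ : Fin m → Fin d,
          T ι κ • pdm (ι ∘ Fin.succ)
            ((X (ι 0) * ∏ a : Fin m, X (κ a)) * (r2p ^ (n'+1-1) * Q)) = 0 := by
        have h1' : ∀ (ι' : Fin q → Fin d) (κ' : Fin (m+1) → Fin d) (a b : Fin q), a ≠ b →
            ∑ i : Fin d, T (Fin.cons (κ' 0) (Function.update (Function.update ι' a i) b i))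
              (κ' ∘ Fin.succ) = 0 := by
          intro ι' κ' a b hab
          simp_rw [Fin.cons_update]
          exact h1 _ _ _ _ (fun h => hab (Fin.succ_injective _ h))
        have h2' : ∀ (ι' : Fin q → Fin d) (κ' : Fin (m+1) → Fin d) (a b : Fin (m+1)), a ≠ b →
            ∑ i : Fin d, T (Fin.cons ((Function.update (Function.update κ' a i) b i) 0)
              (ι')) (((Function.update (Function.update κ' a i) b i)) ∘ Fin.succ) = 0 := by
          intro ι' κ' a b hab
          rcases Fin.eq_zero_or_eq_succ a with rfl | ⟨a', rfl⟩
          · rcases Fin.eq_zero_or_eq_succ b with rfl | ⟨b', rfl⟩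
            · exact absurd rfl hab
            · have heq : ∀ i : Fin d,
                  (Fin.cons ((Function.update (Function.update κ' 0 i) b'.succ i) 0) ι' :
                    Fin (q+1) → Fin d)
                  = Function.update (Fin.cons (κ' 0) ι' : Fin (q+1) → Fin d) 0 i := by
                intro i
                rw [Function.update_of_ne (Fin.succ_ne_zero b').symm, Function.update_self,
                  Fin.update_cons_zero]
              have heq2 : ∀ i : Fin d,
                  (Function.update (Function.update κ' 0 i) b'.succ i) ∘ Fin.succ
                  = Function.update (κ' ∘ Fin.succ) b' i := by
                intro i
                rw [update_succ_comp_succ, update_zero_comp_succ]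
              simp_rw [heq, heq2]
              exact h3 _ _ 0 b'
          · rcases Fin.eq_zero_or_eq_succ b with rfl | ⟨b', rfl⟩
            · have heq : ∀ i : Fin d,
                  (Fin.cons ((Function.update (Function.update κ' a'.succ i) 0 i) 0) ι' :
                    Fin (q+1) → Fin d)
                  = Function.update (Fin.cons (κ' 0) ι' : Fin (q+1) → Fin d) 0 i := by
                intro i
                rw [Function.update_self, Fin.update_cons_zero]
              have heq2 : ∀ i : Fin d,
                  (Function.update (Function.update κ' a'.succ i) 0 i) ∘ Fin.succ
                  = Function.update (κ' ∘ Fin.succ) a' i := by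
                intro i
                funext c
                simp [Function.update_apply, Fin.succ_ne_zero, Fin.succ_inj]
              simp_rw [heq, heq2]
              exact h3 _ _ 0 a'
            · have heq : ∀ i : Fin d,
                  (Fin.cons ((Function.update (Function.update κ' a'.succ i) b'.succ i) 0) ι' :
                    Fin (q+1) → Fin d)
                  = Fin.cons (κ' 0) ι' := by
                intro i
                rw [Function.update_of_ne (Fin.succ_ne_zero b').symm,
                  Function.update_of_ne (Fin.succ_ne_zero a').symm]
              have heq2 : ∀ i : Fin d,
                  (Function.update (Function.update κ' a'.succ i) b'.succ i) ∘ Fin.succ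
                  = Function.update (Function.update (κ' ∘ Fin.succ) a' i) b' i := by
                intro i
                rw [update_succ_comp_succ, update_succ_comp_succ]
              simp_rw [heq, heq2]
              exact h2 _ _ a' b' (fun h => hab (by rw [h]))
        have h3' : ∀ (ι' : Fin q → Fin d) (κ' : Fin (m+1) → Fin d) (a : Fin q) (b : Fin (m+1)),
            ∑ i : Fin d, T (Fin.cons ((Function.update κ' b i) 0) (Function.update ι' a i))
              ((Function.update κ' b i) ∘ Fin.succ) = 0 := by
          intro ι' κ' a b
          rcases Fin.eq_zero_or_eq_succ b with rfl | ⟨b', rfl⟩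
          · have heq : ∀ i : Fin d,
                (Fin.cons ((Function.update κ' 0 i) 0) (Function.update ι' a i) :
                  Fin (q+1) → Fin d)
                = Function.update (Function.update (Fin.cons (κ' 0) ι' : Fin (q+1) → Fin d)
                    a.succ i) 0 i := by
              intro i
              rw [Function.update_self, Fin.cons_update,
                Function.update_comm (Fin.succ_ne_zero a), Fin.update_cons_zero]
            simp_rw [heq, update_zero_comp_succ]
            exact h1 _ _ a.succ 0 (Fin.succ_ne_zero a)
          · have heq : ∀ i : Fin d,
                (Fin.cons ((Function.update κ' b'.succ i) 0) (Function.update ι' a i) :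
                  Fin (q+1) → Fin d)
                = Function.update (Fin.cons (κ' 0) ι' : Fin (q+1) → Fin d) a.succ i := by
              intro i
              rw [Function.update_of_ne (Fin.succ_ne_zero b').symm, Fin.cons_update]
            simp_rw [heq, update_succ_comp_succ]
            exact h3 _ _ a.succ b'
        have hdeg' : Q.totalDegree + n' + 1 ≤ q := by omega
        have hIH := IH (m+1) n' (fun ι' κ' => T (Fin.cons (κ' 0) ι') (κ' ∘ Fin.succ)) Q
          h1' h2' h3' hdeg'
        beta_reduce at hIH
        rw [sum_pi_succ]
        beta_reduce
        have lhs_eq : ∀ (ι' : Fin q → Fin d),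
            (∑ κ' : Fin (m+1) → Fin d, T (Fin.cons (κ' 0) ι') (κ' ∘ Fin.succ) •
              pdm ι' ((∏ a : Fin (m+1), X (κ' a)) * (r2p ^ n' * Q)))
            = ∑ j : Fin d, ∑ κ : Fin m → Fin d, T (Fin.cons j ι') κ •
              pdm ι' ((X j * ∏ a : Fin m, X (κ a)) * (r2p ^ n' * Q)) := by
          intro ι'
          rw [sum_pi_succ]
          beta_reduce
          refine Finset.sum_congr rfl fun j _ => Finset.sum_congr rfl fun κ _ => ?_
          rw [Fin.cons_zero, cons_comp_succ, Fin.prod_univ_succ, Fin.cons_zero]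
          simp_rw [Fin.cons_succ]
        rw [Finset.sum_comm]
        calc ∑ ι' : Fin q → Fin d, ∑ j : Fin d, ∑ κ : Fin m → Fin d,
              T (Fin.cons j ι') κ • pdm ((Fin.cons j ι' : Fin (q+1) → Fin d) ∘ Fin.succ)
                ((X ((Fin.cons j ι' : Fin (q+1) → Fin d) 0) * ∏ a : Fin m, X (κ a)) *
                  (r2p ^ (n'+1-1) * Q))
            = ∑ ι' : Fin q → Fin d, ∑ j : Fin d, ∑ κ : Fin m → Fin d,
              T (Fin.cons j ι') κ • pdm ι' ((X j * ∏ a : Fin m, X (κ a)) * (r2p ^ n' * Q)) := by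
              refine Finset.sum_congr rfl fun ι' _ => Finset.sum_congr rfl fun j _ =>
                Finset.sum_congr rfl fun κ _ => ?_
              rw [cons_comp_succ, Fin.cons_zero]
              norm_num
          _ = 0 := by
              rw [← hIH]
              exact (Finset.sum_congr rfl fun ι' _ => (lhs_eq ι').symm)
      rw [hbracket, smul_zero]
    have hC : ∑ ι : Fin (q+1) → Fin d, ∑ κ : Fin m → Fin d,
        T ι κ • pdm (ι ∘ Fin.succ)
          ((∏ a : Fin m, X (κ a)) * (r2p ^ n * pderiv (ι 0) Q)) = 0 := by
      rw [sum_pi_succ]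
      beta_reduce
      refine Finset.sum_eq_zero fun j _ => ?_
      by_cases hz : pderiv j Q = 0
      · simp [Fin.cons_zero, hz]
      have hQdeg : 1 ≤ Q.totalDegree := by
        by_contra h
        exact hz (pderiv_totalDegree_zero j Q (by omega))
      have hdeg'' : (pderiv j Q).totalDegree + n + 1 ≤ q := by
        have := totalDegree_pderiv_le j Q
        omega
      have h1'' : ∀ (ι' : Fin q → Fin d) (κ : Fin m → Fin d) (a b : Fin q), a ≠ b →
          ∑ i : Fin d, T (Fin.cons j (Function.update (Function.update ι' a i) b i)) κ = 0 := by
        intro ι' κ a b hab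
        simp_rw [Fin.cons_update]
        exact h1 _ _ _ _ (fun h => hab (Fin.succ_injective _ h))
      have h2'' : ∀ (ι' : Fin q → Fin d) (κ : Fin m → Fin d) (a b : Fin m), a ≠ b →
          ∑ i : Fin d, T (Fin.cons j ι') (Function.update (Function.update κ a i) b i) = 0 :=
        fun ι' κ a b hab => h2 _ _ a b hab
      have h3'' : ∀ (ι' : Fin q → Fin d) (κ : Fin m → Fin d) (a : Fin q) (b : Fin m),
          ∑ i : Fin d, T (Fin.cons j (Function.update ι' a i)) (Function.update κ b i) = 0 := by
        intro ι' κ a b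
        simp_rw [Fin.cons_update]
        exact h3 _ _ a.succ b
      have hIH := IH m n (fun ι' κ => T (Fin.cons j ι') κ) (pderiv j Q) h1'' h2'' h3'' hdeg''
      beta_reduce at hIH
      calc ∑ ι' : Fin q → Fin d, ∑ κ : Fin m → Fin d,
            T (Fin.cons j ι') κ • pdm ((Fin.cons j ι' : Fin (q+1) → Fin d) ∘ Fin.succ)
              ((∏ a : Fin m, X (κ a)) * (r2p ^ n * pderiv ((Fin.cons j ι' : Fin (q+1) → Fin d) 0) Q))
          = ∑ ι' : Fin q → Fin d, ∑ κ : Fin m → Fin d,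
            T (Fin.cons j ι') κ • pdm ι' ((∏ a : Fin m, X (κ a)) * (r2p ^ n * pderiv j Q)) := by
            refine Finset.sum_congr rfl fun ι' _ => Finset.sum_congr rfl fun κ _ => ?_
            rw [cons_comp_succ, Fin.cons_zero]
        _ = 0 := hIH
    calc ∑ ι : Fin (q+1) → Fin d, ∑ κ : Fin m → Fin d,
          T ι κ • pdm ι ((∏ a : Fin m, X (κ a)) * (r2p ^ n * Q))
        = (∑ ι : Fin (q+1) → Fin d, ∑ κ : Fin m → Fin d,
            (∑ a : Fin m, if κ a = ι 0 then
              T ι κ • pdm (ι ∘ Fin.succ)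
                ((∏ b ∈ Finset.univ.erase a, X (κ b)) * (r2p ^ n * Q)) else 0))
          + (∑ ι : Fin (q+1) → Fin d, ∑ κ : Fin m → Fin d,
              (2 * (n:ℝ)) • (T ι κ • pdm (ι ∘ Fin.succ)
                ((X (ι 0) * ∏ a : Fin m, X (κ a)) * (r2p ^ (n-1) * Q))))
          + (∑ ι : Fin (q+1) → Fin d, ∑ κ : Fin m → Fin d,
              T ι κ • pdm (ι ∘ Fin.succ)
                ((∏ a : Fin m, X (κ a)) * (r2p ^ n * pderiv (ι 0) Q))) := by
          simp_rw [expand]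
          rw [← Finset.sum_add_distrib, ← Finset.sum_add_distrib]
          refine Finset.sum_congr rfl fun ι _ => ?_
          rw [← Finset.sum_add_distrib, ← Finset.sum_add_distrib]
      _ = 0 := by rw [hA, hB, hC]; simp

end Key

section Analysis

variable {d : ℕ}

lemma hasFDerivAt_eval (p : MvPolynomial (Fin d) ℝ) (x : Fin d → ℝ) :
    HasFDerivAt (fun y : Fin d → ℝ => eval y p)
      (∑ j : Fin d, eval x (pderiv j p) • (ContinuousLinearMap.proj j : (Fin d → ℝ) →L[ℝ] ℝ))
      x := by
  induction p using MvPolynomial.induction_on with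
  | C a =>
    simp only [eval_C, pderiv_C, map_zero, zero_smul, Finset.sum_const_zero]
    exact hasFDerivAt_const a x
  | add p q hp hq =>
    have hfeq : (fun y : Fin d → ℝ => eval y (p + q)) = fun y => eval y p + eval y q := by
      funext y; exact map_add (eval y) p q
    rw [hfeq]
    refine (hp.add hq).congr_fderiv ?_
    rw [← Finset.sum_add_distrib]
    refine Finset.sum_congr rfl fun j _ => ?_
    rw [map_add, map_add, add_smul]
  | mul_X p i hp =>
    have hXi : HasFDerivAt (fun y : Fin d → ℝ => y i)
        (ContinuousLinearMap.proj i : (Fin d → ℝ) →L[ℝ] ℝ) x :=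
      hasFDerivAt_apply i x
    have hmul := hp.mul hXi
    have hfeq : (fun y : Fin d → ℝ => eval y (p * X i)) = fun y => eval y p * y i := by
      funext y; rw [map_mul, eval_X]
    rw [hfeq]
    refine hmul.congr_fderiv ?_
    have hper : ∀ j : Fin d, eval x (pderiv j (p * X i)) •
          (ContinuousLinearMap.proj j : (Fin d → ℝ) →L[ℝ] ℝ)
        = x i • (eval x (pderiv j p) • (ContinuousLinearMap.proj j : (Fin d → ℝ) →L[ℝ] ℝ))
          + (if i = j then eval x p • (ContinuousLinearMap.proj j : (Fin d → ℝ) →L[ℝ] ℝ)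
            else 0) := by
      intro j
      rw [pderiv_mul, pderiv_X, Pi.single_apply, map_add, map_mul, map_mul, eval_X,
        apply_ite (eval x), map_one, map_zero]
      split_ifs
      · rw [add_smul, mul_one, smul_smul, mul_comm]
      · rw [mul_zero, add_zero, add_zero, smul_smul, mul_comm]
    simp_rw [hper]
    rw [Finset.sum_add_distrib, Finset.sum_ite_eq, ← Finset.smul_sum]
    simp [add_comm]

lemma differentiable_eval (p : MvPolynomial (Fin d) ℝ) :
    Differentiable ℝ (fun y : Fin d → ℝ => eval y p) :=
  fun x => (hasFDerivAt_eval p x).differentiableAt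

lemma continuous_eval' (p : MvPolynomial (Fin d) ℝ) :
    Continuous (fun y : Fin d → ℝ => eval y p) :=
  (differentiable_eval p).continuous

lemma fderiv_eval_apply (p : MvPolynomial (Fin d) ℝ) (x : Fin d → ℝ) (i : Fin d) :
    fderiv ℝ (fun y : Fin d → ℝ => eval y p) x (Pi.single i 1) = eval x (pderiv i p) := by
  rw [(hasFDerivAt_eval p x).fderiv, ContinuousLinearMap.sum_apply]
  simp_rw [ContinuousLinearMap.smul_apply, ContinuousLinearMap.proj_apply, Pi.single_apply]
  simp [Finset.sum_ite_eq']

lemma contDiff_pd (i : Fin d) {f : (Fin d → ℝ) → ℝ} (hf : ContDiff ℝ (⊤ : ℕ∞) f) :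
    ContDiff ℝ (⊤ : ℕ∞) (pd i f) :=
  (hf.fderiv_right (by simp)).clm_apply contDiff_const

lemma hcs_pd (i : Fin d) {f : (Fin d → ℝ) → ℝ} (hf : HasCompactSupport f) :
    HasCompactSupport (pd i f) :=
  hf.fderiv_apply ℝ (Pi.single i 1)

lemma contDiff_pdMulti : ∀ {k : ℕ} (ι : Fin k → Fin d) {f : (Fin d → ℝ) → ℝ},
    ContDiff ℝ (⊤ : ℕ∞) f → ContDiff ℝ (⊤ : ℕ∞) (pdMulti ι f)
  | 0, _, _, hf => hf
  | _ + 1, ι, _, hf => contDiff_pd (ι 0) (contDiff_pdMulti (ι ∘ Fin.succ) hf)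

lemma hcs_pdMulti : ∀ {k : ℕ} (ι : Fin k → Fin d) {f : (Fin d → ℝ) → ℝ},
    HasCompactSupport f → HasCompactSupport (pdMulti ι f)
  | 0, _, _, hf => hf
  | _ + 1, ι, _, hf => hcs_pd (ι 0) (hcs_pdMulti (ι ∘ Fin.succ) hf)

lemma ibp_single (p : MvPolynomial (Fin d) ℝ) (i : Fin d) {g : (Fin d → ℝ) → ℝ}
    (hg : ContDiff ℝ (⊤ : ℕ∞) g) (hgc : HasCompactSupport g) :
    ∫ x : Fin d → ℝ, eval x p * pd i g x = - ∫ x : Fin d → ℝ, eval x (pderiv i p) * g x := by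
  have hgd : Differentiable ℝ g := hg.differentiable (by simp)
  have hfun : (fun x : Fin d → ℝ => fderiv ℝ (fun y => eval y p) x (Pi.single i 1) * g x)
      = fun x => eval x (pderiv i p) * g x := by
    funext x; rw [fderiv_eval_apply]
  have h1 : Integrable (fun x : Fin d → ℝ =>
      fderiv ℝ (fun y => eval y p) x (Pi.single i 1) * g x) volume := by
    rw [hfun]
    exact ((continuous_eval' _).mul hg.continuous).integrable_of_hasCompactSupport hgc.mul_left
  have h2 : Integrable (fun x : Fin d → ℝ => eval x p * fderiv ℝ g x (Pi.single i 1)) volume :=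
    ((continuous_eval' _).mul (contDiff_pd i hg).continuous).integrable_of_hasCompactSupport
      (hcs_pd i hgc).mul_left
  have h3 : Integrable (fun x : Fin d → ℝ => eval x p * g x) volume :=
    ((continuous_eval' _).mul hg.continuous).integrable_of_hasCompactSupport hgc.mul_left
  have hmain := integral_mul_fderiv_eq_neg_fderiv_mul_of_integrable h1 h2 h3
    (fun x _ => differentiable_eval p x) (fun x _ => hgd x)
  calc ∫ x : Fin d → ℝ, eval x p * pd i g x
      = ∫ x : Fin d → ℝ, eval x p * fderiv ℝ g x (Pi.single i 1) := rfl
    _ = - ∫ x : Fin d → ℝ, fderiv ℝ (fun y => eval y p) x (Pi.single i 1) * g x := hmain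
    _ = - ∫ x : Fin d → ℝ, eval x (pderiv i p) * g x := by rw [hfun]

lemma ibp_multi : ∀ (k : ℕ) (ι : Fin k → Fin d) (p : MvPolynomial (Fin d) ℝ)
    {f : (Fin d → ℝ) → ℝ}, ContDiff ℝ (⊤ : ℕ∞) f → HasCompactSupport f →
    ∫ x : Fin d → ℝ, eval x p * pdMulti ι f x
      = (-1:ℝ)^k * ∫ x : Fin d → ℝ, eval x (pdm ι p) * f x := by
  intro k
  induction k with
  | zero =>
    intro ι p f hf hfc
    simp [pdMulti, pdm_zero_apply]
  | succ k IH =>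
    intro ι p f hf hfc
    have hstep : pdMulti ι f = pd (ι 0) (pdMulti (ι ∘ Fin.succ) f) := rfl
    rw [hstep, ibp_single p (ι 0) (contDiff_pdMulti _ hf) (hcs_pdMulti _ hfc),
      IH (ι ∘ Fin.succ) (pderiv (ι 0) p) hf hfc, pdm_succ_apply]
    ring

end Analysis

theorem traceless_symmetric_rank_k_conserved_moments
    (d k : ℕ) (hd : 2 ≤ d) (hk : 1 ≤ k)
    (E : (Fin k → Fin d) → (Fin d → ℝ) → ℝ)
    (hE : ∀ ι, ContDiff ℝ (⊤ : ℕ∞) (E ι)) (hEc : ∀ ι, HasCompactSupport (E ι))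
    (hsymm : ∀ (ι : Fin k → Fin d) (σ : Equiv.Perm (Fin k)), E (ι ∘ σ) = E ι)
    (htrace : ∀ (ι : Fin k → Fin d) (a b : Fin k), a ≠ b →
      ∀ x, ∑ i : Fin d, E (Function.update (Function.update ι a i) b i) x = 0)
    (ρ : (Fin d → ℝ) → ℝ)
    (hρ : ρ = fun x => ∑ ι : Fin k → Fin d, pdMulti ι (E ι) x) :
    (∀ (l n : ℕ), l - k + 1 ≤ n → n ≤ l / 2 → ∀ js : Fin (l - 2 * n) → Fin d,
      ∫ x : Fin d → ℝ,
        (∑ i : Fin d, x i ^ 2) ^ n * (∏ a : Fin (l - 2 * n), x (js a)) * ρ x = 0)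
    ∧ (∀ l : ℕ, 2 * k - 2 < l → ¬∃ n : ℕ, l - k + 1 ≤ n ∧ n ≤ l / 2) := by
  have hd0 : 0 < d := by omega
  constructor
  · intro l n hln hn2 js
    have h2n : 2 * n ≤ l := by
      have := (Nat.le_div_iff_mul_le (by norm_num : 0 < 2)).1 hn2
      omega
    set Q : MvPolynomial (Fin d) ℝ := ∏ a : Fin (l - 2 * n), X (js a) with hQ
    set P : MvPolynomial (Fin d) ℝ := (∑ i : Fin d, X i ^ 2) ^ n * Q with hP
    have hQdeg : Q.totalDegree + n + 1 ≤ k := by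
      have h1 : Q.totalDegree ≤ l - 2 * n := by
        refine (totalDegree_finset_prod _ _).trans (le_of_eq ?_)
        calc (∑ a : Fin (l - 2*n), (X (js a) : MvPolynomial (Fin d) ℝ).totalDegree)
            = ∑ _a : Fin (l - 2*n), 1 := Finset.sum_congr rfl fun a _ => totalDegree_X _
          _ = l - 2*n := by simp
      omega
    have hkey : ∀ x : Fin d → ℝ,
        ∑ ι : Fin k → Fin d, E ι x • pdm ι P = 0 := by
      intro x
      have h := key hd0 k 0 n (fun ι (_ : Fin 0 → Fin d) => E ι x) Q
        (fun ι κ a b hab => htrace ι a b hab x)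
        (fun ι κ a => a.elim0)
        (fun ι κ a b => b.elim0)
        hQdeg
      simpa [hP] using h
    have hInt : ∀ ι : Fin k → Fin d, Integrable
        (fun x : Fin d → ℝ => eval x P * pdMulti ι (E ι) x) volume :=
      fun ι => ((continuous_eval' P).mul
        (contDiff_pdMulti ι (hE ι)).continuous).integrable_of_hasCompactSupport
        (hcs_pdMulti ι (hEc ι)).mul_left
    have hInt2 : ∀ ι : Fin k → Fin d, Integrable
        (fun x : Fin d → ℝ => eval x (pdm ι P) * E ι x) volume :=
      fun ι => ((continuous_eval' _).mul (hE ι).continuous).integrable_of_hasCompactSupport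
        (hEc ι).mul_left
    have hevalP : ∀ x : Fin d → ℝ,
        eval x P = (∑ i : Fin d, x i ^ 2) ^ n * ∏ a : Fin (l - 2*n), x (js a) := by
      intro x
      rw [hP, hQ]
      simp
    rw [hρ]
    calc ∫ x : Fin d → ℝ, (∑ i : Fin d, x i ^ 2) ^ n * (∏ a : Fin (l - 2*n), x (js a)) *
          ((fun x => ∑ ι : Fin k → Fin d, pdMulti ι (E ι) x) x)
        = ∑ ι : Fin k → Fin d, ∫ x : Fin d → ℝ, eval x P * pdMulti ι (E ι) x := by
          rw [← integral_finset_sum _ (fun ι _ => hInt ι)]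
          congr 1
          funext x
          beta_reduce
          rw [Finset.mul_sum]
          exact Finset.sum_congr rfl fun ι _ => by rw [hevalP]
      _ = ∑ ι : Fin k → Fin d, ((-1:ℝ)^k * ∫ x : Fin d → ℝ, eval x (pdm ι P) * E ι x) :=
          Finset.sum_congr rfl fun ι _ => ibp_multi k ι P (hE ι) (hEc ι)
      _ = (-1:ℝ)^k * ∑ ι : Fin k → Fin d, ∫ x : Fin d → ℝ, eval x (pdm ι P) * E ι x := by
          rw [Finset.mul_sum]
      _ = (-1:ℝ)^k * ∫ x : Fin d → ℝ, ∑ ι : Fin k → Fin d, eval x (pdm ι P) * E ι x := by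
          rw [integral_finset_sum _ (fun ι _ => hInt2 ι)]
      _ = 0 := by
          have hzero : ∀ x : Fin d → ℝ,
              ∑ ι : Fin k → Fin d, eval x (pdm ι P) * E ι x = 0 := by
            intro x
            calc ∑ ι : Fin k → Fin d, eval x (pdm ι P) * E ι x
                = eval x (∑ ι : Fin k → Fin d, E ι x • pdm ι P) := by
                  rw [map_sum]
                  exact (Finset.sum_congr rfl fun ι _ => by
                    rw [smul_eq_C_mul, map_mul, eval_C, mul_comm]).symm
              _ = 0 := by rw [hkey x, map_zero]
          simp only [hzero]
          simp
  · rintro l hl ⟨n, hn1, hn2⟩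
    have := (Nat.le_div_iff_mul_le (by norm_num : 0 < 2)).1 hn2
    omega
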